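/- Let T be a tree with (T, S) ∈ 𝒯 for some labeling S. Then: (a) a vertex has status C if and only if it is a leaf; (b) a vertex has status A if and only if it is a support vertex; (c) every support vertex has degree two, with one neighbor of status C and one of status B; (d) every vertex of status B has exactly one neighbor of status A and all other neighbors of status B; (e) |S_A| = |S_B| = |S_C|; (f) S_A ∪ S_B is a minimum total dominating set of T. -/

import Mathlib

open SimpleGraph

/-- `S` is a super dominating set of `G`: every vertex `u ∉ S` has some `v ∈ S`
with `N(v) ∩ Sᶜ = {u}`. -/
def SuperDomSet {V : Type} (G : SimpleGraph V) (S : Set V) : Prop :=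
  ∀ u ∈ Sᶜ, ∃ v ∈ S, G.neighborSet v ∩ Sᶜ = {u}

/-- The super domination number `γ_sp(G)`. -/
noncomputable def superDomNum {V : Type} (G : SimpleGraph V) : ℕ :=
  sInf {n | ∃ S : Set V, SuperDomSet G S ∧ S.ncard = n}

/-- `S` is a dominating set of `G`. -/
def DomSet {V : Type} (G : SimpleGraph V) (S : Set V) : Prop :=
  ∀ u ∉ S, ∃ v ∈ S, G.Adj v u

/-- The domination number `γ(G)`. -/
noncomputable def domNum {V : Type} (G : SimpleGraph V) : ℕ :=
  sInf {n | ∃ S : Set V, DomSet G S ∧ S.ncard = n}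

/-- `S` is a total dominating set of `G`: every vertex has a neighbor in `S`. -/
def TotalDomSet {V : Type} (G : SimpleGraph V) (S : Set V) : Prop :=
  ∀ u : V, ∃ v ∈ S, G.Adj v u

/-- The total domination number `γ_t(G)`. -/
noncomputable def totalDomNum {V : Type} (G : SimpleGraph V) : ℕ :=
  sInf {n | ∃ S : Set V, TotalDomSet G S ∧ S.ncard = n}

/-- A leaf is a vertex of degree 1. -/
def IsLeaf {V : Type} (G : SimpleGraph V) (v : V) : Prop :=
  (G.neighborSet v).ncard = 1

/-- A support vertex is a vertex adjacent to a leaf. -/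
def IsSupport {V : Type} (G : SimpleGraph V) (v : V) : Prop :=
  ∃ u, G.Adj v u ∧ IsLeaf G u

/-- Attach a path `u₁u₂u₃u₄u₅u₆` (indices `0,…,5`) to `G` together with the edge
joining `u₃` (index `2`) to `v`. -/
def attachPath6 {V : Type} (G : SimpleGraph V) (v : V) : SimpleGraph (V ⊕ Fin 6) where
  Adj x y :=
    match x, y with
    | Sum.inl a, Sum.inl b => G.Adj a b
    | Sum.inl a, Sum.inr i => a = v ∧ (i : ℕ) = 2
    | Sum.inr i, Sum.inl a => a = v ∧ (i : ℕ) = 2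
    | Sum.inr i, Sum.inr j => (SimpleGraph.pathGraph 6).Adj i j
  symm := by
    constructor
    rintro (a | i) (b | j) h
    · exact h.symm
    · exact h
    · exact h
    · exact (SimpleGraph.pathGraph 6).symm.symm _ _ h
  loopless := by
    constructor
    rintro (a | i) h
    · exact G.loopless.irrefl a h
    · exact (SimpleGraph.pathGraph 6).loopless.irrefl i h

/-- Vertex statuses for labeled trees. -/
inductive Status : Type
  | A | B | C
deriving DecidableEq

/-- The labeling of the (attached or base) path `P₆`: statuses `C,A,B,B,A,C`. -/
def pathLabel : Fin 6 → Status := fun i =>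
  if (i : ℕ) = 0 ∨ (i : ℕ) = 5 then Status.C
  else if (i : ℕ) = 1 ∨ (i : ℕ) = 4 then Status.A
  else Status.B

/-- The family 𝒯 of labeled trees: it contains `(P₆, S₀)` (leaves labeled `C`,
support vertices labeled `A`, middle vertices labeled `B`) and is closed under
operation 𝒪: for a vertex `v` of status `B`, attach a path `u₁…u₆` by the edge
`u₃v`, labeling `u₁,…,u₆` with `C,A,B,B,A,C`. -/
inductive InT : (W : Type) → SimpleGraph W → (W → Status) → Prop
  | base : InT (Fin 6) (SimpleGraph.pathGraph 6) pathLabel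
  | step {W : Type} {G : SimpleGraph W} {L : W → Status} (h : InT W G L)
      (v : W) (hv : L v = Status.B) :
      InT (W ⊕ Fin 6) (attachPath6 G v)
        (fun x => match x with | Sum.inl a => L a | Sum.inr i => pathLabel i)

/-!
Every labeled tree of `𝒯` has the local shape `IsTLabeling`: a `C`-vertex has a single
neighbour, of status `A`; an `A`-vertex has exactly two neighbours, of statuses `C` and `B`; a
`B`-vertex has exactly one neighbour of status `A`, all others of status `B`, and at least one of
those. This shape survives joining two such labeled graphs by an edge between `B`-vertices, and
operation `𝒪` is such a join with a labeled `P₆`, which also adds two vertices of each status.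
(a)–(d) are read off the local shape. For (f), a total dominating set `D` contains every
`A`-vertex, the only neighbour of a leaf, and also a dominator of each `A`-vertex; these
dominators do not have status `A` and are pairwise distinct because no vertex has two
`A`-neighbours. Hence `|D| ≥ 2 |S_A| = |S_A ∪ S_B|`.
-/

open Sum

variable {V W : Type}

lemma Set.ncard_eq_ncard_preimage_inl_add_ncard_preimage_inr [Finite V] [Finite W]
    (s : Set (V ⊕ W)) :
    s.ncard = (inl ⁻¹' s).ncard + (inr ⁻¹' s).ncard := by
  conv_lhs => rw [← Set.image_preimage_inl_union_image_preimage_inr s]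
  rw [Set.ncard_union_eq Set.disjoint_image_inl_image_inr,
    Set.ncard_image_of_injective _ inl_injective, Set.ncard_image_of_injective _ inr_injective]

lemma totalDomNum_eq_ncard {G : SimpleGraph V} {S : Set V} (hS : TotalDomSet G S)
    (hmin : ∀ D, TotalDomSet G D → S.ncard ≤ D.ncard) : totalDomNum G = S.ncard :=
  IsLeast.csInf_eq ⟨⟨S, hS, rfl⟩, by rintro _ ⟨D, hD, rfl⟩; exact hmin D hD⟩

section JoinByEdge

variable {G : SimpleGraph V} {H : SimpleGraph W} {v : V} {w : W}

lemma sum_sup_edge_adj_inl_inl {a b : V} :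
    ((G ⊕g H) ⊔ edge (inl v) (inr w)).Adj (inl a) (inl b) ↔ G.Adj a b := by
  simp [edge_adj]

lemma sum_sup_edge_adj_inl_inr {a : V} {c : W} :
    ((G ⊕g H) ⊔ edge (inl v) (inr w)).Adj (inl a) (inr c) ↔ a = v ∧ c = w := by
  simp [edge_adj]

lemma sum_sup_edge_adj_inr_inl {a : V} {c : W} :
    ((G ⊕g H) ⊔ edge (inl v) (inr w)).Adj (inr c) (inl a) ↔ a = v ∧ c = w := by
  simp [edge_adj, and_comm]

lemma sum_sup_edge_adj_inr_inr {c d : W} :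
    ((G ⊕g H) ⊔ edge (inl v) (inr w)).Adj (inr c) (inr d) ↔ H.Adj c d := by
  simp [edge_adj]

lemma sum_sup_edge_neighborSet_inl {a : V} (ha : a ≠ v) :
    ((G ⊕g H) ⊔ edge (inl v) (inr w)).neighborSet (inl a) = inl '' G.neighborSet a := by
  ext (b | c)
  · rw [mem_neighborSet, sum_sup_edge_adj_inl_inl]; simp
  · rw [mem_neighborSet, sum_sup_edge_adj_inl_inr]; simp [ha]

lemma sum_sup_edge_neighborSet_inr {c : W} (hc : c ≠ w) :
    ((G ⊕g H) ⊔ edge (inl v) (inr w)).neighborSet (inr c) = inr '' H.neighborSet c := by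
  ext (b | d)
  · rw [mem_neighborSet, sum_sup_edge_adj_inr_inl]; simp [hc]
  · rw [mem_neighborSet, sum_sup_edge_adj_inr_inr]; simp

end JoinByEdge

lemma attachPath6_eq (G : SimpleGraph V) (v : V) :
    attachPath6 G v = (G ⊕g pathGraph 6) ⊔ edge (inl v) (inr 2) := by
  ext (a | i) (b | j) <;> simp [attachPath6, edge_adj, Fin.ext_iff, and_comm]

structure IsTLabeling (G : SimpleGraph V) (L : V → Status) : Prop where
  neighborSet_of_C : ∀ x, L x = .C → ∃ y, L y = .A ∧ G.neighborSet x = {y}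
  neighborSet_of_A : ∀ x, L x = .A → ∃ c b, L c = .C ∧ L b = .B ∧ G.neighborSet x = {c, b}
  adj_of_B : ∀ x, L x = .B → ∃ a, G.Adj x a ∧ L a = .A ∧
    (∃ b, G.Adj x b ∧ L b = .B) ∧ ∀ b, G.Adj x b → b ≠ a → L b = .B

lemma isTLabeling_pathGraph : IsTLabeling (pathGraph 6) pathLabel where
  neighborSet_of_C := by
    simp only [Set.ext_iff, mem_neighborSet, Set.mem_singleton_iff, pathGraph_adj]
    decide
  neighborSet_of_A := by
    simp only [Set.ext_iff, mem_neighborSet, Set.mem_singleton_iff, Set.mem_insert_iff,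
      pathGraph_adj]
    decide
  adj_of_B := by
    simp only [pathGraph_adj]
    decide

namespace IsTLabeling

variable {G : SimpleGraph V} {L : V → Status}

theorem sum_sup_edge {H : SimpleGraph W} {L' : W → Status} (hG : IsTLabeling G L)
    (hH : IsTLabeling H L') {v : V} {w : W} (hv : L v = .B) (hw : L' w = .B) :
    IsTLabeling ((G ⊕g H) ⊔ edge (inl v) (inr w)) (Sum.elim L L') where
  neighborSet_of_C := by
    rintro (a | c) hx
    · obtain ⟨y, hy, hN⟩ := hG.neighborSet_of_C a hx
      have ha : a ≠ v := by rintro rfl; simp_all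
      exact ⟨inl y, hy, by rw [sum_sup_edge_neighborSet_inl ha, hN, Set.image_singleton]⟩
    · obtain ⟨y, hy, hN⟩ := hH.neighborSet_of_C c hx
      have hc : c ≠ w := by rintro rfl; simp_all
      exact ⟨inr y, hy, by rw [sum_sup_edge_neighborSet_inr hc, hN, Set.image_singleton]⟩
  neighborSet_of_A := by
    rintro (a | c) hx
    · obtain ⟨c, b, hc, hb, hN⟩ := hG.neighborSet_of_A a hx
      have ha : a ≠ v := by rintro rfl; simp_all
      exact ⟨inl c, inl b, hc, hb,
        by rw [sum_sup_edge_neighborSet_inl ha, hN, Set.image_pair]⟩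
    · obtain ⟨c', b, hc', hb, hN⟩ := hH.neighborSet_of_A c hx
      have hc : c ≠ w := by rintro rfl; simp_all
      exact ⟨inr c', inr b, hc', hb,
        by rw [sum_sup_edge_neighborSet_inr hc, hN, Set.image_pair]⟩
  adj_of_B := by
    rintro (a | c) hx
    · obtain ⟨a', ha', hA, ⟨b, hb, hB⟩, hrest⟩ := hG.adj_of_B a hx
      refine ⟨inl a', sum_sup_edge_adj_inl_inl.2 ha', hA,
        ⟨inl b, sum_sup_edge_adj_inl_inl.2 hb, hB⟩, ?_⟩
      rintro (b | d) hb hne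
      · exact hrest b (sum_sup_edge_adj_inl_inl.1 hb) (by rintro rfl; exact hne rfl)
      · obtain ⟨-, rfl⟩ := sum_sup_edge_adj_inl_inr.1 hb
        exact hw
    · obtain ⟨a', ha', hA, ⟨b, hb, hB⟩, hrest⟩ := hH.adj_of_B c hx
      refine ⟨inr a', sum_sup_edge_adj_inr_inr.2 ha', hA,
        ⟨inr b, sum_sup_edge_adj_inr_inr.2 hb, hB⟩, ?_⟩
      rintro (b | d) hb hne
      · obtain ⟨rfl, -⟩ := sum_sup_edge_adj_inr_inl.1 hb
        exact hv
      · exact hrest d (sum_sup_edge_adj_inr_inr.1 hb) (by rintro rfl; exact hne rfl)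

lemma ne_statusA_of_adj (hG : IsTLabeling G L) {x y : V} (hx : L x = .A) (hxy : G.Adj x y) :
    L y ≠ .A := by
  obtain ⟨c, b, hc, hb, hN⟩ := hG.neighborSet_of_A x hx
  have hy : y ∈ ({c, b} : Set V) := hN ▸ hxy
  rcases hy with rfl | rfl <;> simp_all

lemma eq_of_adj_of_adj (hG : IsTLabeling G L) {d x x' : V} (hx : G.Adj d x) (hx' : G.Adj d x')
    (hLx : L x = .A) (hLx' : L x' = .A) : x = x' := by
  cases hd : L d with
  | A => exact absurd hLx (hG.ne_statusA_of_adj hd hx)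
  | B =>
    obtain ⟨a, -, -, -, hrest⟩ := hG.adj_of_B d hd
    have h_eq : ∀ y, G.Adj d y → L y = .A → y = a := fun y hy hLy => by
      by_contra hne; simp [hrest y hy hne] at hLy
    rw [h_eq x hx hLx, h_eq x' hx' hLx']
  | C =>
    obtain ⟨y, -, hN⟩ := hG.neighborSet_of_C d hd
    have hx : x ∈ ({y} : Set V) := hN ▸ hx
    have hx' : x' ∈ ({y} : Set V) := hN ▸ hx'
    rw [Set.mem_singleton_iff.1 hx, Set.mem_singleton_iff.1 hx']

lemma statusC_iff_isLeaf [Finite V] (hG : IsTLabeling G L) (x : V) :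
    L x = .C ↔ IsLeaf G x := by
  refine ⟨fun hx => ?_, fun hleaf => ?_⟩
  · obtain ⟨y, -, hN⟩ := hG.neighborSet_of_C x hx
    rw [IsLeaf, hN, Set.ncard_singleton]
  · cases hx : L x with
    | A =>
      obtain ⟨c, b, hc, hb, hN⟩ := hG.neighborSet_of_A x hx
      rw [IsLeaf, hN, Set.ncard_pair (by rintro rfl; simp_all)] at hleaf
      cases hleaf
    | B =>
      obtain ⟨a, ha, hA, ⟨b, hb, hB⟩, -⟩ := hG.adj_of_B x hx
      have : 1 < (G.neighborSet x).ncard :=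
        (Set.one_lt_ncard_iff (Set.toFinite _)).2 ⟨a, b, ha, hb, by rintro rfl; simp_all⟩
      rw [IsLeaf] at hleaf
      omega
    | C => rfl

lemma statusA_iff_isSupport [Finite V] (hG : IsTLabeling G L) (x : V) :
    L x = .A ↔ IsSupport G x := by
  refine ⟨fun hx => ?_, fun ⟨u, hxu, hu⟩ => ?_⟩
  · obtain ⟨c, b, hc, -, hN⟩ := hG.neighborSet_of_A x hx
    exact ⟨c, show c ∈ G.neighborSet x by simp [hN], (hG.statusC_iff_isLeaf c).1 hc⟩
  · obtain ⟨y, hy, hN⟩ := hG.neighborSet_of_C u ((hG.statusC_iff_isLeaf u).2 hu)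
    have hx : x ∈ ({y} : Set V) := hN ▸ hxu.symm
    rwa [Set.mem_singleton_iff.1 hx]

lemma totalDomSet (hG : IsTLabeling G L) : TotalDomSet G {x | L x = .A ∨ L x = .B} := by
  intro u
  cases hu : L u with
  | A =>
    obtain ⟨c, b, -, hb, hN⟩ := hG.neighborSet_of_A u hu
    exact ⟨b, Or.inr hb, (show b ∈ G.neighborSet u by simp [hN]).symm⟩
  | B =>
    obtain ⟨a, ha, hA, -⟩ := hG.adj_of_B u hu
    exact ⟨a, Or.inl hA, ha.symm⟩
  | C =>
    obtain ⟨y, hy, hN⟩ := hG.neighborSet_of_C u hu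
    exact ⟨y, Or.inl hy, (show y ∈ G.neighborSet u by simp [hN]).symm⟩

lemma statusA_subset_of_totalDomSet (hG : IsTLabeling G L) {D : Set V}
    (hD : TotalDomSet G D) : {x | L x = .A} ⊆ D := by
  intro x hx
  obtain ⟨c, b, hc, -, hN⟩ := hG.neighborSet_of_A x hx
  obtain ⟨d, hdD, hdc⟩ := hD c
  obtain ⟨y, -, hcN⟩ := hG.neighborSet_of_C c hc
  have hxc : x ∈ ({y} : Set V) := hcN ▸ (show c ∈ G.neighborSet x by simp [hN]).symm
  have hdc : d ∈ ({y} : Set V) := hcN ▸ hdc.symm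
  rwa [Set.mem_singleton_iff.1 hxc, ← Set.mem_singleton_iff.1 hdc]

lemma two_mul_ncard_statusA_le [Finite V] (hG : IsTLabeling G L) {D : Set V}
    (hD : TotalDomSet G D) : 2 * {x | L x = .A}.ncard ≤ D.ncard := by
  have hAD := hG.statusA_subset_of_totalDomSet hD
  choose f hfD hf using hD
  set A := {x | L x = .A}
  have hinj : Set.InjOn f A := fun x hx x' hx' hxx' =>
    hG.eq_of_adj_of_adj (hf x) (hxx' ▸ hf x') hx hx'
  have hdisj : Disjoint A (f '' A) := by
    rw [Set.disjoint_right]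
    rintro _ ⟨x, hx, rfl⟩
    exact hG.ne_statusA_of_adj hx (hf x).symm
  have hsub : A ∪ f '' A ⊆ D := by
    rintro _ (hx | ⟨x, -, rfl⟩)
    · exact hAD hx
    · exact hfD x
  calc 2 * A.ncard = (A ∪ f '' A).ncard := by
        rw [Set.ncard_union_eq hdisj, hinj.ncard_image, two_mul]
    _ ≤ D.ncard := Set.ncard_le_ncard hsub

end IsTLabeling

lemma ncard_pathLabel_eq (s : Status) : {i | pathLabel i = s}.ncard = 2 := by
  rw [Set.ncard_eq_toFinset_card']
  cases s <;> decide

namespace InT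

variable {G : SimpleGraph W} {L : W → Status}

lemma finite (h : InT W G L) : Finite W := by
  induction h with
  | base => infer_instance
  | step _ _ _ ih => infer_instance

theorem rec_sum_sup_edge {motive : (W : Type) → SimpleGraph W → (W → Status) → Prop}
    (base : motive (Fin 6) (pathGraph 6) pathLabel)
    (step : ∀ {W : Type} {G : SimpleGraph W} {L : W → Status} [Finite W] (v : W), L v = .B →
      motive W G L →
      motive (W ⊕ Fin 6) ((G ⊕g pathGraph 6) ⊔ edge (inl v) (inr 2)) (Sum.elim L pathLabel))
    (h : InT W G L) : motive W G L := by
  induction h with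
  | base => exact base
  | step h v hv ih =>
    have := h.finite
    rw [attachPath6_eq]
    convert step v hv ih using 1
    -- the labeling built by `InT.step` is a `match`, which agrees with `Sum.elim` only pointwise
    funext x
    cases x <;> rfl

lemma isTLabeling (h : InT W G L) : IsTLabeling G L :=
  h.rec_sum_sup_edge isTLabeling_pathGraph fun _ hv hG =>
    hG.sum_sup_edge isTLabeling_pathGraph hv (by decide)

lemma ncard_status_eq (h : InT W G L) (s t : Status) :
    {x | L x = s}.ncard = {x | L x = t}.ncard := by
  refine h.rec_sum_sup_edge (motive := fun W _ L =>
    ∀ s t : Status, {x : W | L x = s}.ncard = {x | L x = t}.ncard) ?_ ?_ s t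
  · intro s t
    rw [ncard_pathLabel_eq, ncard_pathLabel_eq]
  · intro W G L _ v _ ih s t
    rw [Set.ncard_eq_ncard_preimage_inl_add_ncard_preimage_inr,
      Set.ncard_eq_ncard_preimage_inl_add_ncard_preimage_inr {x | _ = t}]
    exact congrArg₂ (· + ·) (ih s t) ((ncard_pathLabel_eq s).trans (ncard_pathLabel_eq t).symm)

end InT

/-- Structural properties of the labeled trees `(T, S) ∈ 𝒯`. -/
theorem InT_properties {W : Type} {G : SimpleGraph W} {L : W → Status}
    (h : InT W G L) :
    (∀ x, L x = Status.C ↔ IsLeaf G x) ∧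
    (∀ x, L x = Status.A ↔ IsSupport G x) ∧
    (∀ x, IsSupport G x → (G.neighborSet x).ncard = 2 ∧
      ∃ a b, a ≠ b ∧ G.neighborSet x = {a, b} ∧ L a = Status.C ∧ L b = Status.B) ∧
    (∀ x, L x = Status.B → ∃ a, G.Adj x a ∧ L a = Status.A ∧
      ∀ b, G.Adj x b → b ≠ a → L b = Status.B) ∧
    ({x | L x = Status.A}.ncard = {x | L x = Status.B}.ncard ∧
      {x | L x = Status.B}.ncard = {x | L x = Status.C}.ncard) ∧
    (TotalDomSet G {x | L x = Status.A ∨ L x = Status.B} ∧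
      {x | L x = Status.A ∨ L x = Status.B}.ncard = totalDomNum G) := by
  have := h.finite
  have hG := h.isTLabeling
  have hAB : {x | L x = .A ∨ L x = .B}.ncard = 2 * {x | L x = .A}.ncard := by
    rw [Set.ofPred_or, Set.ncard_union_eq (Set.disjoint_left.2 fun x hA hB => by simp_all),
      ← h.ncard_status_eq .A .B, two_mul]
  refine ⟨hG.statusC_iff_isLeaf, hG.statusA_iff_isSupport, fun x hx => ?_,
    fun x hx => ?_, ⟨h.ncard_status_eq _ _, h.ncard_status_eq _ _⟩, hG.totalDomSet, ?_⟩
  · obtain ⟨c, b, hc, hb, hN⟩ := hG.neighborSet_of_A x ((hG.statusA_iff_isSupport x).2 hx)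
    have hcb : c ≠ b := by rintro rfl; simp_all
    exact ⟨by rw [hN, Set.ncard_pair hcb], c, b, hcb, hN, hc, hb⟩
  · obtain ⟨a, ha, hA, -, hrest⟩ := hG.adj_of_B x hx
    exact ⟨a, ha, hA, hrest⟩
  · refine (totalDomNum_eq_ncard hG.totalDomSet fun D hD => ?_).symm
    exact hAB ▸ hG.two_mul_ncard_statusA_le hD
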